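/- arXiv:2601.05501 — 3 statements merged into one kernel-verified Lean document; each statement's English description precedes it below -/
import Mathlib

section
/- Let E be a real inner product space, f : E → ℝ an L-smooth function with L > 0, and let θ, v ∈ E, and C ≥ 1, δ ≥ 0, Σ² ≥ 0, η > 0 satisfy: (i) ⟨∇f(θ), v⟩ ≥ (1/2)·‖∇f(θ)‖² − (1/2)·δ; (ii) ‖v‖² ≤ C·‖∇f(θ)‖² + Σ²; (iii) η ≤ 1/(2·L·C). Then f(θ − η·v) ≤ f(θ) − (η/4)·‖∇f(θ)‖² + (η/2)·δ + (L·η²/2)·Σ². -/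
open RealInnerProductSpace

lemma descent_lemma
    {E : Type*} [NormedAddCommGroup E] [InnerProductSpace ℝ E] [CompleteSpace E]
    (f : E → ℝ) (L : ℝ) (hL : 0 ≤ L) (hf : Differentiable ℝ f)
    (hlip : ∀ x y : E, ‖gradient f x - gradient f y‖ ≤ L * ‖x - y‖)
    (x u : E) :
    f (x + u) ≤ f x + ⟪gradient f x, u⟫ + L / 2 * ‖u‖ ^ 2 := by
  set g : ℝ → ℝ := fun t => f (x + t • u) with hg
  have hcurve : ∀ t : ℝ, HasDerivAt (fun t : ℝ => x + t • u) u t := by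
    intro t
    simpa using ((hasDerivAt_id t).smul_const u).const_add x
  have hderiv : ∀ t : ℝ, HasDerivAt g (⟪gradient f (x + t • u), u⟫) t := by
    intro t
    have h1 := (hf (x + t • u)).hasGradientAt.hasFDerivAt
    have := h1.comp_hasDerivAt t (hcurve t)
    simpa [InnerProductSpace.toDual_apply_apply, hg, Function.comp_def] using this
  have hgradcont : Continuous (fun y => gradient f y) :=
    (LipschitzWith.of_dist_le_mul (K := L.toNNReal) (fun y z => by
      simpa [dist_eq_norm, Real.coe_toNNReal L hL] using hlip y z)).continuous
  have hcont : Continuous (fun t : ℝ => ⟪gradient f (x + t • u), u⟫) := by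
    exact (hgradcont.comp (by continuity)).inner continuous_const
  have hFTC : ∫ t in (0:ℝ)..1, ⟪gradient f (x + t • u), u⟫ = g 1 - g 0 :=
    intervalIntegral.integral_eq_sub_of_hasDerivAt (fun t _ => hderiv t)
      (hcont.intervalIntegrable 0 1)
  have hbound : ∀ t ∈ Set.Icc (0:ℝ) 1,
      ⟪gradient f (x + t • u), u⟫ ≤ ⟪gradient f x, u⟫ + L * t * ‖u‖ ^ 2 := by
    intro t ht
    have h1 : ⟪gradient f (x + t • u) - gradient f x, u⟫ ≤
        ‖gradient f (x + t • u) - gradient f x‖ * ‖u‖ :=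
      real_inner_le_norm _ _
    have h2 : ‖gradient f (x + t • u) - gradient f x‖ ≤ L * (t * ‖u‖) := by
      have := hlip (x + t • u) x
      simpa [norm_smul, abs_of_nonneg ht.1, mul_assoc] using this
    have h3 : ‖gradient f (x + t • u) - gradient f x‖ * ‖u‖ ≤ L * (t * ‖u‖) * ‖u‖ :=
      mul_le_mul_of_nonneg_right h2 (norm_nonneg u)
    have h4 : ⟪gradient f (x + t • u) - gradient f x, u⟫ ≤ L * t * ‖u‖ ^ 2 := by
      calc ⟪gradient f (x + t • u) - gradient f x, u⟫ ≤ L * (t * ‖u‖) * ‖u‖ := h1.trans h3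
        _ = L * t * ‖u‖ ^ 2 := by ring
    have := inner_sub_left (𝕜 := ℝ) (gradient f (x + t • u)) (gradient f x) u
    linarith [this ▸ h4]
  have hint : ∫ t in (0:ℝ)..1, ⟪gradient f (x + t • u), u⟫ ≤
      ∫ t in (0:ℝ)..1, (⟪gradient f x, u⟫ + L * t * ‖u‖ ^ 2) := by
    apply intervalIntegral.integral_mono_on zero_le_one
      (hcont.intervalIntegrable 0 1)
      ((continuous_const.add ((continuous_const.mul continuous_id).mul
        continuous_const)).intervalIntegrable 0 1)
    exact hbound
  have hval : ∫ t in (0:ℝ)..1, (⟪gradient f x, u⟫ + L * t * ‖u‖ ^ 2) =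
      ⟪gradient f x, u⟫ + L / 2 * ‖u‖ ^ 2 := by
    have hcongr : (∫ t in (0:ℝ)..1, (⟪gradient f x, u⟫ + L * t * ‖u‖ ^ 2)) =
        ∫ t in (0:ℝ)..1, (⟪gradient f x, u⟫ + (L * ‖u‖ ^ 2) * t) := by
      apply intervalIntegral.integral_congr
      intro t _
      ring
    rw [hcongr, intervalIntegral.integral_add intervalIntegrable_const
      ((by fun_prop : Continuous fun t : ℝ => (L * ‖u‖ ^ 2) * t).intervalIntegrable 0 1),
      intervalIntegral.integral_const_mul, integral_id, intervalIntegral.integral_const]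
    simp
    ring
  have hg0 : g 0 = f x := by simp [hg]
  have hg1 : g 1 = f (x + u) := by simp [hg]
  rw [hval] at hint
  rw [hFTC, hg0, hg1] at hint
  linarith

/-- Combined one-step progress bound: for `L`-smooth `f` (`L > 0`), if
(i) `⟪∇f θ, v⟫ ≥ (1/2)‖∇f θ‖² - (1/2)δ`, (ii) `‖v‖² ≤ C‖∇f θ‖² + Σ²`, and
(iii) `η ≤ 1/(2LC)` with `C ≥ 1`, `δ ≥ 0`, `Σ² ≥ 0`, `η > 0`, then
`f(θ - η • v) ≤ f θ - (η/4)‖∇f θ‖² + (η/2)δ + (Lη²/2)Σ²`. -/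
theorem one_step_progress
    {E : Type*} [NormedAddCommGroup E] [InnerProductSpace ℝ E] [CompleteSpace E]
    (f : E → ℝ) (L : ℝ) (hL : 0 < L) (hf : Differentiable ℝ f)
    (hlip : ∀ x y : E, ‖gradient f x - gradient f y‖ ≤ L * ‖x - y‖)
    (θ v : E) (C δ σ2 η : ℝ)
    (hC : 1 ≤ C) (hδ : 0 ≤ δ) (hσ : 0 ≤ σ2) (hη : 0 < η)
    (h1 : ⟪gradient f θ, v⟫ ≥ 1 / 2 * ‖gradient f θ‖ ^ 2 - 1 / 2 * δ)
    (h2 : ‖v‖ ^ 2 ≤ C * ‖gradient f θ‖ ^ 2 + σ2)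
    (h3 : η ≤ 1 / (2 * L * C)) :
    f (θ - η • v) ≤
      f θ - η / 4 * ‖gradient f θ‖ ^ 2 + η / 2 * δ + L * η ^ 2 / 2 * σ2 := by
  have key := descent_lemma f L hL.le hf hlip θ (-(η • v))
  have heq : θ + -(η • v) = θ - η • v := by abel
  rw [heq] at key
  have hinner : ⟪gradient f θ, -(η • v)⟫ = -(η * ⟪gradient f θ, v⟫) := by
    rw [inner_neg_right, real_inner_smul_right]
  have hnorm : ‖-(η • v)‖ ^ 2 = η ^ 2 * ‖v‖ ^ 2 := by
    rw [norm_neg, norm_smul, mul_pow, Real.norm_eq_abs, sq_abs]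
  rw [hinner, hnorm] at key
  have hLC : 0 < 2 * L * C := by positivity
  have hηLC : L * η * C ≤ 1 / 2 := by
    rw [le_div_iff₀ hLC] at h3
    nlinarith
  have hg2 : (0:ℝ) ≤ ‖gradient f θ‖ ^ 2 := by positivity
  nlinarith [mul_le_mul_of_nonneg_left h2 (by positivity : (0:ℝ) ≤ L / 2 * η ^ 2),
    mul_le_mul_of_nonneg_left (mul_le_mul_of_nonneg_right hηLC hg2) (sq_nonneg η |>.trans_eq rfl)]
end

section
/- Let E be a real inner product space, (Ω, μ) a probability space, f : E → ℝ an L-smooth function with L > 0, θ ∈ E, and v : Ω → E an integrable random vector with integrable squared norm. Suppose C ≥ 1, δ ≥ 0, Σ² ≥ 0, η > 0 satisfy: (i) ⟨∇f(θ), ∫ v dμ⟩ ≥ (1/2)·‖∇f(θ)‖² − (1/2)·δ; (ii) ∫ ‖v(ω)‖² dμ(ω) ≤ C·‖∇f(θ)‖² + Σ²; (iii) η ≤ 1/(2·L·C). Then ∫ f(θ − η·v(ω)) dμ(ω) ≤ f(θ) − (η/4)·‖∇f(θ)‖² + (η/2)·δ + (L·η²/2)·Σ². -/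
open RealInnerProductSpace MeasureTheory

/-- Descent lemma: for `L`-smooth `f`, the first-order Taylor error is bounded by
`L/2 ‖y - x‖²` in absolute value. -/
lemma smooth_taylor_bound
    {E : Type*} [NormedAddCommGroup E] [InnerProductSpace ℝ E] [CompleteSpace E]
    (f : E → ℝ) (L : ℝ) (hL : 0 < L) (hf : Differentiable ℝ f)
    (hlip : ∀ x y : E, ‖gradient f x - gradient f y‖ ≤ L * ‖x - y‖)
    (x y : E) :
    |f y - f x - ⟪gradient f x, y - x⟫| ≤ L / 2 * ‖y - x‖ ^ 2 := by
  set u := y - x with hu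
  -- the 1D restriction
  have hcurve : ∀ t : ℝ, HasDerivAt (fun s : ℝ => x + s • u) u t := by
    intro t
    simpa using ((hasDerivAt_id t).smul_const u).const_add x
  have hg : ∀ t : ℝ, HasDerivAt (fun s : ℝ => f (x + s • u))
      ⟪gradient f (x + t • u), u⟫ t := by
    intro t
    have h1 : HasFDerivAt f (fderiv ℝ f (x + t • u)) (x + t • u) :=
      (hf (x + t • u)).hasFDerivAt
    have := h1.comp_hasDerivAt t (hcurve t)
    refine this.congr_deriv ?_
    have : HasGradientAt f (gradient f (x + t • u)) (x + t • u) :=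
      (hf (x + t • u)).hasGradientAt
    have h2 := this.hasFDerivAt.unique h1
    rw [← h2]
    simp [InnerProductSpace.toDual]
  have key : ∀ t ∈ Set.Icc (0:ℝ) 1,
      |⟪gradient f (x + t • u), u⟫ - ⟪gradient f x, u⟫| ≤ L * t * ‖u‖ ^ 2 := by
    intro t ht
    have h1 : ⟪gradient f (x + t • u), u⟫ - ⟪gradient f x, u⟫
        = ⟪gradient f (x + t • u) - gradient f x, u⟫ := by
      rw [inner_sub_left]
    rw [h1]
    calc |⟪gradient f (x + t • u) - gradient f x, u⟫|
        ≤ ‖gradient f (x + t • u) - gradient f x‖ * ‖u‖ := abs_real_inner_le_norm _ _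
      _ ≤ (L * ‖(x + t • u) - x‖) * ‖u‖ := by
          apply mul_le_mul_of_nonneg_right (hlip _ _) (norm_nonneg _)
      _ = L * t * ‖u‖ ^ 2 := by
          have : ‖(x + t • u) - x‖ = t * ‖u‖ := by
            simp [norm_smul, abs_of_nonneg ht.1]
          rw [this]; ring
  -- upper bound via antitone auxiliary function
  have upper : f y - f x - ⟪gradient f x, u⟫ ≤ L / 2 * ‖u‖ ^ 2 := by
    set φ : ℝ → ℝ := fun t => f (x + t • u) - t * ⟪gradient f x, u⟫ - L / 2 * t ^ 2 * ‖u‖ ^ 2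
      with hφdef
    have hφ : ∀ t : ℝ, HasDerivAt φ
        (⟪gradient f (x + t • u), u⟫ - ⟪gradient f x, u⟫ - L * t * ‖u‖ ^ 2) t := by
      intro t
      have h2 : HasDerivAt (fun s : ℝ => s * ⟪gradient f x, u⟫) ⟪gradient f x, u⟫ t := by
        simpa using (hasDerivAt_id t).mul_const ⟪gradient f x, u⟫
      have h3 : HasDerivAt (fun s : ℝ => L / 2 * s ^ 2 * ‖u‖ ^ 2) (L * t * ‖u‖ ^ 2) t := by
        have := ((hasDerivAt_pow 2 t).const_mul (L / 2)).mul_const (‖u‖ ^ 2)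
        refine this.congr_deriv ?_
        ring
      exact ((hg t).sub h2).sub h3
    have hanti : AntitoneOn φ (Set.Icc (0:ℝ) 1) := by
      apply antitoneOn_of_deriv_nonpos (convex_Icc 0 1)
      · exact fun t _ => ((hφ t).continuousAt).continuousWithinAt
      · intro t ht
        exact ((hφ t).differentiableAt).differentiableWithinAt
      · intro t ht
        rw [interior_Icc] at ht
        rw [(hφ t).deriv]
        have := key t ⟨le_of_lt ht.1, le_of_lt ht.2⟩
        have h4 := (abs_le.mp this).2
        linarith
    have h01 := hanti (Set.left_mem_Icc.2 zero_le_one) (Set.right_mem_Icc.2 zero_le_one) zero_le_one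
    simp only [hφdef] at h01
    have hy : x + (1:ℝ) • u = y := by simp [hu]
    rw [hy] at h01
    simp [-inner_gradient_left] at h01
    linarith
  -- lower bound via monotone auxiliary function
  have lower : -(L / 2 * ‖u‖ ^ 2) ≤ f y - f x - ⟪gradient f x, u⟫ := by
    set φ : ℝ → ℝ := fun t => f (x + t • u) - t * ⟪gradient f x, u⟫ + L / 2 * t ^ 2 * ‖u‖ ^ 2
      with hφdef
    have hφ : ∀ t : ℝ, HasDerivAt φ
        (⟪gradient f (x + t • u), u⟫ - ⟪gradient f x, u⟫ + L * t * ‖u‖ ^ 2) t := by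
      intro t
      have h2 : HasDerivAt (fun s : ℝ => s * ⟪gradient f x, u⟫) ⟪gradient f x, u⟫ t := by
        simpa using (hasDerivAt_id t).mul_const ⟪gradient f x, u⟫
      have h3 : HasDerivAt (fun s : ℝ => L / 2 * s ^ 2 * ‖u‖ ^ 2) (L * t * ‖u‖ ^ 2) t := by
        have := ((hasDerivAt_pow 2 t).const_mul (L / 2)).mul_const (‖u‖ ^ 2)
        refine this.congr_deriv ?_
        ring
      exact ((hg t).sub h2).add h3
    have hmono : MonotoneOn φ (Set.Icc (0:ℝ) 1) := by
      apply monotoneOn_of_deriv_nonneg (convex_Icc 0 1)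
      · exact fun t _ => ((hφ t).continuousAt).continuousWithinAt
      · intro t ht
        exact ((hφ t).differentiableAt).differentiableWithinAt
      · intro t ht
        rw [interior_Icc] at ht
        rw [(hφ t).deriv]
        have := key t ⟨le_of_lt ht.1, le_of_lt ht.2⟩
        have h4 := (abs_le.mp this).1
        linarith
    have h01 := hmono (Set.left_mem_Icc.2 zero_le_one) (Set.right_mem_Icc.2 zero_le_one) zero_le_one
    simp only [hφdef] at h01
    have hy : x + (1:ℝ) • u = y := by simp [hu]
    rw [hy] at h01
    simp [-inner_gradient_left] at h01
    linarith
  rw [abs_le]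
  exact ⟨lower, upper⟩

/-- Conditional-expectation one-step progress bound: for `L`-smooth `f` (`L > 0`), a
probability space `(Ω, μ)`, an integrable random direction `v` with integrable squared
norm, if (i) `⟪∇f θ, E[v]⟫ ≥ (1/2)‖∇f θ‖² - (1/2)δ`, (ii) `E‖v‖² ≤ C‖∇f θ‖² + Σ²`, and
(iii) `η ≤ 1/(2LC)`, then
`E[f(θ - η • v)] ≤ f θ - (η/4)‖∇f θ‖² + (η/2)δ + (Lη²/2)Σ²`. -/
theorem expected_one_step_progress
    {E : Type*} [NormedAddCommGroup E] [InnerProductSpace ℝ E] [CompleteSpace E]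
    {Ω : Type*} [MeasurableSpace Ω] (μ : Measure Ω) [IsProbabilityMeasure μ]
    (f : E → ℝ) (L : ℝ) (hL : 0 < L) (hf : Differentiable ℝ f)
    (hlip : ∀ x y : E, ‖gradient f x - gradient f y‖ ≤ L * ‖x - y‖)
    (θ : E) (v : Ω → E)
    (hv : Integrable v μ)
    (hv2 : Integrable (fun ω => ‖v ω‖ ^ 2) μ)
    (C δ σ2 η : ℝ)
    (hC : 1 ≤ C) (hδ : 0 ≤ δ) (hσ : 0 ≤ σ2) (hη : 0 < η)
    (h1 : ⟪gradient f θ, ∫ ω, v ω ∂μ⟫ ≥ 1 / 2 * ‖gradient f θ‖ ^ 2 - 1 / 2 * δ)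
    (h2 : ∫ ω, ‖v ω‖ ^ 2 ∂μ ≤ C * ‖gradient f θ‖ ^ 2 + σ2)
    (h3 : η ≤ 1 / (2 * L * C)) :
    ∫ ω, f (θ - η • v ω) ∂μ ≤
      f θ - η / 4 * ‖gradient f θ‖ ^ 2 + η / 2 * δ + L * η ^ 2 / 2 * σ2 := by
  set g := gradient f θ with hg
  -- pointwise descent bound
  have hpt : ∀ ω, f (θ - η • v ω) ≤ f θ - η * ⟪g, v ω⟫ + L * η ^ 2 / 2 * ‖v ω‖ ^ 2 := by
    intro ω
    have := smooth_taylor_bound f L hL hf hlip θ (θ - η • v ω)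
    have hsub : θ - η • v ω - θ = -(η • v ω) := by abel
    rw [hsub] at this
    have h4 := (abs_le.mp this).2
    have hin : ⟪g, -(η • v ω)⟫ = -(η * ⟪g, v ω⟫) := by
      rw [inner_neg_right, inner_smul_right]
    have hnorm : ‖-(η • v ω)‖ ^ 2 = η ^ 2 * ‖v ω‖ ^ 2 := by
      rw [norm_neg, norm_smul]
      simp [abs_of_pos hη, mul_pow]
    rw [hin, hnorm] at h4
    nlinarith
  -- pointwise lower bound for integrability
  have hptl : ∀ ω, f θ - η * ⟪g, v ω⟫ - L * η ^ 2 / 2 * ‖v ω‖ ^ 2 ≤ f (θ - η • v ω) := by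
    intro ω
    have := smooth_taylor_bound f L hL hf hlip θ (θ - η • v ω)
    have hsub : θ - η • v ω - θ = -(η • v ω) := by abel
    rw [hsub] at this
    have h4 := (abs_le.mp this).1
    have hin : ⟪g, -(η • v ω)⟫ = -(η * ⟪g, v ω⟫) := by
      rw [inner_neg_right, inner_smul_right]
    have hnorm : ‖-(η • v ω)‖ ^ 2 = η ^ 2 * ‖v ω‖ ^ 2 := by
      rw [norm_neg, norm_smul]
      simp [abs_of_pos hη, mul_pow]
    rw [hin, hnorm] at h4
    nlinarith
  -- integrability facts
  have hinner : Integrable (fun ω => ⟪g, v ω⟫) μ := hv.const_inner g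
  have hRHS : Integrable (fun ω => f θ - η * ⟪g, v ω⟫ + L * η ^ 2 / 2 * ‖v ω‖ ^ 2) μ :=
    ((integrable_const (f θ)).sub (hinner.const_mul η)).add (hv2.const_mul _)
  have hLHSint : Integrable (fun ω => f (θ - η • v ω)) μ := by
    have hcont : Continuous (fun z : E => f (θ - η • z)) :=
      hf.continuous.comp (continuous_const.sub (continuous_id.const_smul η))
    have hmeas : AEStronglyMeasurable (fun ω => f (θ - η • v ω)) μ :=
      hcont.comp_aestronglyMeasurable hv.aestronglyMeasurable
    have hGint : Integrable
        (fun ω => |f θ| + η * ‖g‖ * ‖v ω‖ + L * η ^ 2 / 2 * ‖v ω‖ ^ 2) μ :=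
      ((integrable_const _).add ((hv.norm).const_mul _)).add (hv2.const_mul _)
    refine hGint.mono' hmeas (Filter.Eventually.of_forall fun ω => ?_)
    have hup := hpt ω
    have hlo := hptl ω
    have hib := abs_real_inner_le_norm g (v ω)
    have h5 : |⟪g, v ω⟫| ≤ ‖g‖ * ‖v ω‖ := hib
    have h6 := abs_le.mp h5
    rw [Real.norm_eq_abs, abs_le]
    have h7 : η * ⟪g, v ω⟫ ≤ η * (‖g‖ * ‖v ω‖) := mul_le_mul_of_nonneg_left h6.2 hη.le
    have h8 : -(η * (‖g‖ * ‖v ω‖)) ≤ η * ⟪g, v ω⟫ := by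
      have := mul_le_mul_of_nonneg_left h6.1 hη.le
      linarith [this]
    have h9 : -|f θ| ≤ f θ := neg_abs_le _
    have h10 : f θ ≤ |f θ| := le_abs_self _
    constructor <;> nlinarith [norm_nonneg (v ω), sq_nonneg ‖v ω‖]
  -- integrate the pointwise bound
  have hint : ∫ ω, f (θ - η • v ω) ∂μ ≤
      ∫ ω, (f θ - η * ⟪g, v ω⟫ + L * η ^ 2 / 2 * ‖v ω‖ ^ 2) ∂μ :=
    integral_mono hLHSint hRHS hpt
  have heval : ∫ ω, (f θ - η * ⟪g, v ω⟫ + L * η ^ 2 / 2 * ‖v ω‖ ^ 2) ∂μ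
      = f θ - η * ⟪g, ∫ ω, v ω ∂μ⟫ + L * η ^ 2 / 2 * ∫ ω, ‖v ω‖ ^ 2 ∂μ := by
    have e1 : ∫ ω, (f θ - η * ⟪g, v ω⟫ + L * η ^ 2 / 2 * ‖v ω‖ ^ 2) ∂μ
        = (∫ ω, (f θ - η * ⟪g, v ω⟫) ∂μ) + ∫ ω, L * η ^ 2 / 2 * ‖v ω‖ ^ 2 ∂μ :=
      integral_add ((integrable_const (f θ)).sub (hinner.const_mul η)) (hv2.const_mul _)
    have e2 : ∫ ω, (f θ - η * ⟪g, v ω⟫) ∂μ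
        = (∫ (_ : Ω), f θ ∂μ) - ∫ ω, η * ⟪g, v ω⟫ ∂μ :=
      integral_sub (integrable_const (f θ)) (hinner.const_mul η)
    rw [e1, e2, integral_const, integral_const_mul, integral_const_mul, integral_inner hv]
    simp
  rw [heval] at hint
  -- arithmetic
  have hLC : L * C * η ≤ 1 / 2 := by
    have hpos : 0 < 2 * L * C := by positivity
    rw [le_div_iff₀ hpos] at h3
    have e : η * (2 * L * C) = 2 * (L * C * η) := by ring
    linarith [e ▸ h3]
  have key : L * η ^ 2 / 2 * (C * ‖g‖ ^ 2) ≤ η / 4 * ‖g‖ ^ 2 := by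
    have hm := mul_le_mul_of_nonneg_left hLC (by positivity : (0:ℝ) ≤ η * ‖g‖ ^ 2 / 2)
    have e1 : η * ‖g‖ ^ 2 / 2 * (L * C * η) = L * η ^ 2 / 2 * (C * ‖g‖ ^ 2) := by ring
    have e2 : η * ‖g‖ ^ 2 / 2 * (1 / 2) = η / 4 * ‖g‖ ^ 2 := by ring
    linarith
  have h2' : L * η ^ 2 / 2 * (∫ ω, ‖v ω‖ ^ 2 ∂μ) ≤ L * η ^ 2 / 2 * (C * ‖g‖ ^ 2 + σ2) :=
    mul_le_mul_of_nonneg_left h2 (by positivity)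
  have ha := mul_le_mul_of_nonneg_left h1 (le_of_lt hη)
  have ea : η * (1 / 2 * ‖g‖ ^ 2 - 1 / 2 * δ) = η / 2 * ‖g‖ ^ 2 - η / 2 * δ := by ring
  have eb : L * η ^ 2 / 2 * (C * ‖g‖ ^ 2 + σ2)
      = L * η ^ 2 / 2 * (C * ‖g‖ ^ 2) + L * η ^ 2 / 2 * σ2 := by ring
  linarith
end

section
/- Let E be a real inner product space, f : E → ℝ an L-smooth function (L > 0) bounded below by f*, and fix T ∈ ℕ with T ≥ 1, constants C ≥ 1, δ ≥ 0, Σ² ≥ 0, and step size η > 0 with η ≤ 1/(2·L·C). Let θ : ℕ → E and v : ℕ → E be sequences with θ(t+1) = θ(t) − η·v(t) for all t, and suppose for every t < T: (i) ⟨∇f(θ(t)), v(t)⟩ ≥ (1/2)·‖∇f(θ(t))‖² − (1/2)·δ and (ii) ‖v(t)‖² ≤ C·‖∇f(θ(t))‖² + Σ². Then min_{t<T} ‖∇f(θ(t))‖² ≤ 4·(f(θ(0)) − f*)/(η·T) + 2·δ + 2·L·η·Σ². -/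
open RealInnerProductSpace

/-- Descent lemma for functions with Lipschitz gradient. -/
lemma descent_lemma_aux
    {E : Type*} [NormedAddCommGroup E] [InnerProductSpace ℝ E] [CompleteSpace E]
    (f : E → ℝ) (L : ℝ) (hL : 0 < L) (hf : Differentiable ℝ f)
    (hlip : ∀ x y : E, ‖gradient f x - gradient f y‖ ≤ L * ‖x - y‖)
    (x y : E) :
    f y ≤ f x + ⟪gradient f x, y - x⟫ + L / 2 * ‖y - x‖ ^ 2 := by
  set d := y - x with hd
  set ψ : ℝ → ℝ := fun s => f (x + s • d) - s * ⟪gradient f x, d⟫ - L / 2 * s ^ 2 * ‖d‖ ^ 2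
    with hψ
  have hline : ∀ s : ℝ, HasDerivAt (fun s : ℝ => x + s • d) d s := by
    intro s
    simpa using ((hasDerivAt_id s).smul_const d).const_add x
  have hφ : ∀ s : ℝ, HasDerivAt (fun s : ℝ => f (x + s • d))
      ⟪gradient f (x + s • d), d⟫ s := by
    intro s
    have hF : HasFDerivAt f (InnerProductSpace.toDual ℝ E (gradient f (x + s • d)))
        (x + s • d) := ((hf _).hasGradientAt).hasFDerivAt
    simpa [InnerProductSpace.toDual_apply_apply, Function.comp_def] using hF.comp_hasDerivAt s (hline s)
  have hψd : ∀ s : ℝ, HasDerivAt ψ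
      (⟪gradient f (x + s • d), d⟫ - ⟪gradient f x, d⟫ - L / 2 * (2 * s) * ‖d‖ ^ 2) s := by
    intro s
    have h1 := (hφ s).sub ((hasDerivAt_id s).mul_const (⟪gradient f x, d⟫ : ℝ))
    have h2 : HasDerivAt (fun s : ℝ => L / 2 * s ^ 2 * ‖d‖ ^ 2)
        (L / 2 * (2 * s) * ‖d‖ ^ 2) s := by
      have := ((hasDerivAt_pow 2 s).const_mul (L / 2)).mul_const (‖d‖ ^ 2)
      simpa [mul_comm, mul_assoc, mul_left_comm] using this
    simpa [ψ, one_mul, Pi.sub_def] using h1.sub h2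
  have hψdiff : Differentiable ℝ ψ := fun s => (hψd s).differentiableAt
  have hanti : AntitoneOn ψ (Set.Icc (0 : ℝ) 1) := by
    apply antitoneOn_of_deriv_nonpos (convex_Icc 0 1) hψdiff.continuous.continuousOn
      (hψdiff.differentiableOn)
    intro s hs
    rw [interior_Icc] at hs
    rw [(hψd s).deriv]
    have hib : ⟪gradient f (x + s • d) - gradient f x, d⟫ ≤ L * s * ‖d‖ ^ 2 := by
      calc ⟪gradient f (x + s • d) - gradient f x, d⟫
          ≤ ‖gradient f (x + s • d) - gradient f x‖ * ‖d‖ := real_inner_le_norm _ _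
        _ ≤ (L * ‖(x + s • d) - x‖) * ‖d‖ := by
            gcongr; exact hlip _ _
        _ = L * s * ‖d‖ ^ 2 := by
            rw [show (x + s • d) - x = s • d by abel, norm_smul]
            simp [abs_of_pos hs.1, pow_two]; ring
    have : ⟪gradient f (x + s • d), d⟫ - ⟪gradient f x, d⟫
        = ⟪gradient f (x + s • d) - gradient f x, d⟫ := by
      rw [inner_sub_left]
    rw [this]
    nlinarith [hib]
  have h01 := hanti (Set.left_mem_Icc.mpr zero_le_one) (Set.right_mem_Icc.mpr zero_le_one)
    zero_le_one
  simp only [ψ, zero_smul, add_zero, one_smul, zero_mul, one_pow, mul_one, sub_zero,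
    one_mul] at h01
  have hxy : x + d = y := by simp [hd]
  rw [hxy] at h01
  linarith

/-- Deterministic analog of Theorem 1 (Convergence of Hi-ZFO): for `L`-smooth `f`
(`L > 0`) bounded below by `f*`, iterates `θ (t+1) = θ t - η • v t` with
`η ≤ 1/(2LC)`, inner-product lower bound (i) and second-moment bound (ii) for all
`t < T`, the minimum squared gradient norm over the first `T` iterates satisfies
`min_{t<T} ‖∇f(θ t)‖² ≤ 4(f(θ 0) - f*)/(η T) + 2δ + 2 L η Σ²`. -/
theorem hi_zfo_convergence_deterministic
    {E : Type*} [NormedAddCommGroup E] [InnerProductSpace ℝ E] [CompleteSpace E]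
    (f : E → ℝ) (L : ℝ) (hL : 0 < L) (hf : Differentiable ℝ f)
    (hlip : ∀ x y : E, ‖gradient f x - gradient f y‖ ≤ L * ‖x - y‖)
    (fstar : ℝ) (hbdd : ∀ x, fstar ≤ f x)
    (T : ℕ) (hT : 1 ≤ T) (C δ σ2 η : ℝ)
    (hC : 1 ≤ C) (hδ : 0 ≤ δ) (hσ : 0 ≤ σ2) (hη : 0 < η)
    (hηle : η ≤ 1 / (2 * L * C))
    (θ v : ℕ → E) (hupd : ∀ t, θ (t + 1) = θ t - η • v t)
    (h1 : ∀ t < T, ⟪gradient f (θ t), v t⟫ ≥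
      1 / 2 * ‖gradient f (θ t)‖ ^ 2 - 1 / 2 * δ)
    (h2 : ∀ t < T, ‖v t‖ ^ 2 ≤ C * ‖gradient f (θ t)‖ ^ 2 + σ2) :
    (Finset.range T).inf' (Finset.nonempty_range_iff.mpr (by omega))
        (fun t => ‖gradient f (θ t)‖ ^ 2) ≤
      4 * (f (θ 0) - fstar) / (η * T) + 2 * δ + 2 * L * η * σ2 := by
  set m := (Finset.range T).inf' (Finset.nonempty_range_iff.mpr (by omega))
      (fun t => ‖gradient f (θ t)‖ ^ 2) with hm
  have hLC : 0 < L * C := by positivity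
  have hηLC : L * C * η ≤ 1 / 2 := by
    have h := (le_div_iff₀ (by positivity : (0:ℝ) < 2 * L * C)).mp hηle
    nlinarith
  -- per-step decrease with min bound
  have key : ∀ t < T, η / 4 * m ≤ f (θ t) - f (θ (t + 1)) + (η * δ / 2 + L * η ^ 2 * σ2 / 2) := by
    intro t ht
    have hdesc := descent_lemma_aux f L hL hf hlip (θ t) (θ (t + 1))
    have hdiff : θ (t + 1) - θ t = -(η • v t) := by rw [hupd t]; abel
    rw [hdiff] at hdesc
    have hinner : ⟪gradient f (θ t), -(η • v t)⟫ = -(η * ⟪gradient f (θ t), v t⟫) := by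
      rw [inner_neg_right, real_inner_smul_right]
    have hnorm : ‖-(η • v t)‖ ^ 2 = η ^ 2 * ‖v t‖ ^ 2 := by
      rw [norm_neg, norm_smul]
      simp [abs_of_pos hη]; ring
    rw [hinner, hnorm] at hdesc
    have hi := h1 t ht
    have hii := h2 t ht
    have hg : m ≤ ‖gradient f (θ t)‖ ^ 2 :=
      Finset.inf'_le _ (Finset.mem_range.mpr ht)
    have hgnn : (0:ℝ) ≤ ‖gradient f (θ t)‖ ^ 2 := by positivity
    have e1 : η * (1 / 2 * ‖gradient f (θ t)‖ ^ 2 - 1 / 2 * δ) ≤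
        η * ⟪gradient f (θ t), v t⟫ := mul_le_mul_of_nonneg_left hi hη.le
    have e2 : L / 2 * (η ^ 2 * ‖v t‖ ^ 2) ≤
        L / 2 * (η ^ 2 * (C * ‖gradient f (θ t)‖ ^ 2 + σ2)) := by
      gcongr
    have e3 : η / 4 * ‖gradient f (θ t)‖ ^ 2 ≤
        (η / 2 - L * C * η ^ 2 / 2) * ‖gradient f (θ t)‖ ^ 2 := by
      nlinarith [mul_nonneg (mul_nonneg hη.le
        (by linarith : (0:ℝ) ≤ 1 / 2 - L * C * η)) hgnn]
    have e4 : η / 4 * m ≤ η / 4 * ‖gradient f (θ t)‖ ^ 2 :=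
      mul_le_mul_of_nonneg_left hg (by positivity)
    nlinarith [hdesc, e1, e2, e3, e4]
  -- sum over t < T
  have hsum : (T : ℝ) * (η / 4 * m) ≤
      f (θ 0) - fstar + (T : ℝ) * (η * δ / 2 + L * η ^ 2 * σ2 / 2) := by
    have hs : ∑ t ∈ Finset.range T, (η / 4 * m) ≤
        ∑ t ∈ Finset.range T,
          (f (θ t) - f (θ (t + 1)) + (η * δ / 2 + L * η ^ 2 * σ2 / 2)) := by
      apply Finset.sum_le_sum
      intro t ht
      exact key t (Finset.mem_range.mp ht)
    rw [Finset.sum_const, Finset.sum_add_distrib, Finset.sum_range_sub' (fun t => f (θ t)),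
      Finset.sum_const] at hs
    simp only [Finset.card_range, nsmul_eq_mul] at hs
    have := hbdd (θ T)
    linarith
  have hTpos : (0:ℝ) < T := by exact_mod_cast hT
  have hηT : 0 < η * T := by positivity
  have hkey2 : (m - 2 * δ - 2 * L * η * σ2) * (η * T) ≤ 4 * (f (θ 0) - fstar) := by
    nlinarith [hsum]
  have hfin := (le_div_iff₀ hηT).mpr hkey2
  linarith
end
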